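/- arXiv:2310.11961 — 2 statements merged into one kernel-verified Lean document; each statement's English description precedes it below -/
import Mathlib

section
/- Let p ∈ (1,∞) and let ρ₁, ρ₂ be probability densities on ℝ^d with finite p-th moments. Then W_p(ρ₁·Leb, ρ₂·Leb)^p ≤ 2^{p-1} ∫_{ℝ^d} |x|^p |ρ₁(x) − ρ₂(x)| dx. -/
/-!
Write `μᵢ = ν + νᵢ` with `ν = min(ρ₁, ρ₂)·Leb` the common part and `ν₁ = (ρ₁ - ρ₂)₊·Leb`,
`ν₂ = (ρ₂ - ρ₁)₊·Leb`, which have the same mass `ε`. Transport `ν` to itself along the diagonal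
at no cost, and couple `ν₁` with `ν₂` by the normalised product `ε⁻¹ ν₁ ⊗ ν₂`. Since
`|x - y|^p ≤ 2^{p-1} (|x|^p + |y|^p)`, the product part costs at most
`2^{p-1} (∫ |x|^p dν₁ + ∫ |y|^p dν₂) = 2^{p-1} ∫ |x|^p |ρ₁ - ρ₂| dx`.
-/

open MeasureTheory ENNReal

/-- `p`-th power of the `p`-Wasserstein distance, defined as the infimum over
couplings of `∫ ‖x - y‖^p dγ`. -/
noncomputable def WpPow (p : ℝ) {d : ℕ}
    (μ ν : Measure (Fin d → ℝ)) : ℝ≥0∞ :=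
  ⨅ (γ : Measure ((Fin d → ℝ) × (Fin d → ℝ)))
    (_ : γ.map Prod.fst = μ ∧ γ.map Prod.snd = ν),
    ∫⁻ z, ENNReal.ofReal (‖z.1 - z.2‖ ^ p) ∂γ

theorem norm_sub_rpow_le_two_rpow_mul {E : Type*} [SeminormedAddCommGroup E] {p : ℝ}
    (hp : 1 ≤ p) (x y : E) : ‖x - y‖ ^ p ≤ 2 ^ (p - 1) * (‖x‖ ^ p + ‖y‖ ^ p) :=
  calc ‖x - y‖ ^ p ≤ (‖x‖ + ‖y‖) ^ p :=
        Real.rpow_le_rpow (norm_nonneg _) (norm_sub_le x y) (by linarith)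
    _ ≤ 2 ^ (p - 1) * (‖x‖ ^ p + ‖y‖ ^ p) := by
        exact_mod_cast NNReal.rpow_add_le_mul_rpow_add_rpow ‖x‖₊ ‖y‖₊ hp

theorem ENNReal.ofReal_abs_sub {a b : ℝ} (ha : 0 ≤ a) (hb : 0 ≤ b) :
    ENNReal.ofReal |a - b| =
      ENNReal.ofReal a - ENNReal.ofReal b + (ENNReal.ofReal b - ENNReal.ofReal a) := by
  rcases le_total a b with hab | hab
  · rw [tsub_eq_zero_of_le (ofReal_le_ofReal hab), zero_add, ← ofReal_sub _ ha, abs_sub_comm,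
      abs_of_nonneg (sub_nonneg.mpr hab)]
  · rw [tsub_eq_zero_of_le (ofReal_le_ofReal hab), add_zero, ← ofReal_sub _ hb,
      abs_of_nonneg (sub_nonneg.mpr hab)]

namespace MeasureTheory.Measure

variable {α β : Type*} [MeasurableSpace α] [MeasurableSpace β]

theorem map_fst_map_diag (μ : Measure α) : (μ.map Function.diag).map Prod.fst = μ := by
  rw [map_map measurable_fst measurable_diag]
  exact map_id

theorem map_snd_map_diag (μ : Measure α) : (μ.map Function.diag).map Prod.snd = μ := by
  rw [map_map measurable_snd measurable_diag]
  exact map_id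

theorem inv_measure_univ_mul_smul_self (μ : Measure α) [IsFiniteMeasure μ] :
    ((μ Set.univ)⁻¹ * μ Set.univ) • μ = μ := by
  rcases eq_or_ne (μ Set.univ) 0 with h | h
  · rw [measure_univ_eq_zero.mp h, smul_zero]
  · rw [ENNReal.inv_mul_cancel h (measure_ne_top μ _), one_smul]

theorem map_fst_inv_smul_prod {μ : Measure α} {ν : Measure β} [IsFiniteMeasure μ]
    [IsFiniteMeasure ν] (h : μ Set.univ = ν Set.univ) :
    ((μ Set.univ)⁻¹ • μ.prod ν).map Prod.fst = μ := by
  rw [Measure.map_smul, map_fst_prod, smul_smul, ← h, inv_measure_univ_mul_smul_self]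

theorem map_snd_inv_smul_prod {μ : Measure α} {ν : Measure β} [IsFiniteMeasure μ]
    [IsFiniteMeasure ν] (h : μ Set.univ = ν Set.univ) :
    ((μ Set.univ)⁻¹ • μ.prod ν).map Prod.snd = ν := by
  rw [Measure.map_smul, map_snd_prod, smul_smul, h, inv_measure_univ_mul_smul_self]

theorem withDensity_eq_withDensity_inf_add_withDensity_tsub (μ : Measure α)
    {f g : α → ℝ≥0∞} (hf : Measurable f) (hg : Measurable g) :
    μ.withDensity f = μ.withDensity (f ⊓ g) + μ.withDensity (f - g) := by
  rw [← withDensity_add_left (hf.inf hg)]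
  congr 1
  funext x
  show f x = min (f x) (g x) + (f x - g x)
  rw [add_comm, tsub_add_min]

theorem withDensity_tsub_univ_eq_of_lintegral_eq {μ : Measure α} {f g : α → ℝ≥0∞}
    (hf : Measurable f) (hg : Measurable g) (hfg : ∫⁻ x, f x ∂μ = ∫⁻ x, g x ∂μ)
    (hfin : ∫⁻ x, f x ∂μ ≠ ∞) :
    μ.withDensity (f - g) Set.univ = μ.withDensity (g - f) Set.univ := by
  have hf_split := congrArg (· Set.univ)
    (withDensity_eq_withDensity_inf_add_withDensity_tsub μ hf hg)
  have hg_split := congrArg (· Set.univ)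
    (withDensity_eq_withDensity_inf_add_withDensity_tsub μ hg hf)
  simp only [add_apply, withDensity_apply _ MeasurableSet.univ, setLIntegral_univ]
    at hf_split hg_split
  have hmin_fin : ∫⁻ x, (f ⊓ g) x ∂μ ≠ ∞ :=
    ne_top_of_le_ne_top hfin (lintegral_mono fun x => inf_le_left)
  rw [inf_comm, ← hfg, hf_split] at hg_split
  simp only [withDensity_apply _ MeasurableSet.univ, setLIntegral_univ]
  exact (ENNReal.add_right_inj hmin_fin).mp hg_split

end MeasureTheory.Measure

section TransportCost

variable {E : Type*} [NormedAddCommGroup E] [MeasurableSpace E] {p : ℝ}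

theorem lintegral_norm_sub_rpow_map_diag (hp : 0 < p) (μ : Measure E) :
    ∫⁻ z, ENNReal.ofReal (‖z.1 - z.2‖ ^ p) ∂(μ.map Function.diag) = 0 :=
  le_antisymm ((lintegral_map_le _ _).trans (by simp [Real.zero_rpow hp.ne'])) zero_le

theorem lintegral_norm_sub_rpow_prod_le [OpensMeasurableSpace E] (hp : 1 ≤ p)
    (μ ν : Measure E) [SFinite μ] [SFinite ν] :
    ∫⁻ z, ENNReal.ofReal (‖z.1 - z.2‖ ^ p) ∂μ.prod ν ≤
      ENNReal.ofReal (2 ^ (p - 1)) * (ν Set.univ * ∫⁻ x, ENNReal.ofReal (‖x‖ ^ p) ∂μ +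
        μ Set.univ * ∫⁻ y, ENNReal.ofReal (‖y‖ ^ p) ∂ν) := by
  set F : E → ℝ≥0∞ := fun x => ENNReal.ofReal (‖x‖ ^ p)
  have hF : Measurable F := by fun_prop
  calc ∫⁻ z, ENNReal.ofReal (‖z.1 - z.2‖ ^ p) ∂μ.prod ν
      ≤ ∫⁻ z, ENNReal.ofReal (2 ^ (p - 1)) * (F z.1 + F z.2) ∂μ.prod ν := by
        refine lintegral_mono fun z => ?_
        rw [← ofReal_add (by positivity) (by positivity), ← ofReal_mul (by positivity)]
        exact ofReal_le_ofReal (norm_sub_rpow_le_two_rpow_mul hp z.1 z.2)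
    _ = ENNReal.ofReal (2 ^ (p - 1)) *
          (ν Set.univ * ∫⁻ x, F x ∂μ + μ Set.univ * ∫⁻ y, F y ∂ν) := by
        have hF₁ : Measurable fun z : E × E => F z.1 := hF.comp measurable_fst
        have hF₁₂ : Measurable fun z : E × E => F z.1 + F z.2 :=
          hF₁.add (hF.comp measurable_snd)
        rw [lintegral_const_mul _ hF₁₂, lintegral_add_left hF₁,
          ← lintegral_map hF measurable_fst,
          ← lintegral_map hF measurable_snd, Measure.map_fst_prod, Measure.map_snd_prod,
          lintegral_smul_measure, lintegral_smul_measure, smul_eq_mul, smul_eq_mul]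

end TransportCost

section Wasserstein

variable {d : ℕ} {p : ℝ}

theorem WpPow_le_lintegral {μ ν : Measure (Fin d → ℝ)}
    (γ : Measure ((Fin d → ℝ) × (Fin d → ℝ))) (h₁ : γ.map Prod.fst = μ) (h₂ : γ.map Prod.snd = ν) :
    WpPow p μ ν ≤ ∫⁻ z, ENNReal.ofReal (‖z.1 - z.2‖ ^ p) ∂γ :=
  iInf₂_le γ ⟨h₁, h₂⟩

theorem WpPow_add_le (hp : 1 ≤ p) (μ ν₁ ν₂ : Measure (Fin d → ℝ)) [IsFiniteMeasure ν₁]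
    [IsFiniteMeasure ν₂] (hmass : ν₁ Set.univ = ν₂ Set.univ) :
    WpPow p (μ + ν₁) (μ + ν₂) ≤ ENNReal.ofReal (2 ^ (p - 1)) *
      (∫⁻ x, ENNReal.ofReal (‖x‖ ^ p) ∂ν₁ + ∫⁻ x, ENNReal.ofReal (‖x‖ ^ p) ∂ν₂) := by
  set C := ENNReal.ofReal (2 ^ (p - 1))
  set M := ∫⁻ x, ENNReal.ofReal (‖x‖ ^ p) ∂ν₁ + ∫⁻ x, ENNReal.ofReal (‖x‖ ^ p) ∂ν₂
  set γ := μ.map Function.diag + (ν₁ Set.univ)⁻¹ • ν₁.prod ν₂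
  calc WpPow p (μ + ν₁) (μ + ν₂) ≤ ∫⁻ z, ENNReal.ofReal (‖z.1 - z.2‖ ^ p) ∂γ :=
        WpPow_le_lintegral γ
          (by rw [Measure.map_add _ _ measurable_fst, Measure.map_fst_map_diag,
            Measure.map_fst_inv_smul_prod hmass])
          (by rw [Measure.map_add _ _ measurable_snd, Measure.map_snd_map_diag,
            Measure.map_snd_inv_smul_prod hmass])
    _ = (ν₁ Set.univ)⁻¹ * ∫⁻ z, ENNReal.ofReal (‖z.1 - z.2‖ ^ p) ∂ν₁.prod ν₂ := by
        rw [lintegral_add_measure, lintegral_smul_measure,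
          lintegral_norm_sub_rpow_map_diag (by linarith), zero_add, smul_eq_mul]
    _ ≤ (ν₁ Set.univ)⁻¹ * (C * (ν₁ Set.univ * M)) := by
        gcongr
        simpa only [← hmass, ← mul_add] using lintegral_norm_sub_rpow_prod_le hp ν₁ ν₂
    _ = ((ν₁ Set.univ)⁻¹ * ν₁ Set.univ) * (C * M) := by ring
    _ ≤ C * M := mul_le_of_le_one_left zero_le (ENNReal.inv_mul_le_one _)

theorem WpPow_withDensity_le (hp : 1 ≤ p) (μ : Measure (Fin d → ℝ))
    {f g : (Fin d → ℝ) → ℝ≥0∞} (hf : Measurable f) (hg : Measurable g)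
    (hfg : ∫⁻ x, f x ∂μ = ∫⁻ x, g x ∂μ) (hfin : ∫⁻ x, f x ∂μ ≠ ∞) :
    WpPow p (μ.withDensity f) (μ.withDensity g) ≤ ENNReal.ofReal (2 ^ (p - 1)) *
      ∫⁻ x, (f x - g x + (g x - f x)) * ENNReal.ofReal (‖x‖ ^ p) ∂μ := by
  have hF : Measurable fun x : Fin d → ℝ => ENNReal.ofReal (‖x‖ ^ p) := by fun_prop
  have : IsFiniteMeasure (μ.withDensity (f - g)) := isFiniteMeasure_withDensity
    (ne_top_of_le_ne_top hfin (lintegral_mono fun x => tsub_le_self))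
  have : IsFiniteMeasure (μ.withDensity (g - f)) := isFiniteMeasure_withDensity
    (ne_top_of_le_ne_top (hfg ▸ hfin) (lintegral_mono fun x => tsub_le_self))
  rw [Measure.withDensity_eq_withDensity_inf_add_withDensity_tsub μ hf hg,
    Measure.withDensity_eq_withDensity_inf_add_withDensity_tsub μ hg hf, inf_comm g f]
  refine (WpPow_add_le hp _ _ _
    (Measure.withDensity_tsub_univ_eq_of_lintegral_eq hf hg hfg hfin)).trans_eq ?_
  simp only [lintegral_withDensity_eq_lintegral_mul _ (hf.sub hg) hF,
    lintegral_withDensity_eq_lintegral_mul _ (hg.sub hf) hF, Pi.mul_apply, Pi.sub_apply, add_mul]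
  have hmul : Measurable fun x => (f x - g x) * ENNReal.ofReal (‖x‖ ^ p) := (hf.sub hg).mul hF
  rw [lintegral_add_left hmul]

end Wasserstein

/-- For two probability densities `ρ₁, ρ₂` with finite `p`-th
moments, `W_p(ρ₁·Leb, ρ₂·Leb)^p ≤ 2^{p-1} ∫ ‖x‖^p |ρ₁ x - ρ₂ x| dx`. -/
theorem wasserstein_density_difference_estimate (d : ℕ) (p : ℝ) (hp : 1 < p)
    (ρ₁ ρ₂ : (Fin d → ℝ) → ℝ)
    (h₁0 : ∀ x, 0 ≤ ρ₁ x) (h₂0 : ∀ x, 0 ≤ ρ₂ x)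
    (h₁meas : Measurable ρ₁) (h₂meas : Measurable ρ₂)
    (h₁1 : ∫ x, ρ₁ x = 1) (h₂1 : ∫ x, ρ₂ x = 1)
    (h₁p : Integrable (fun x : Fin d → ℝ => ‖x‖ ^ p * ρ₁ x))
    (h₂p : Integrable (fun x : Fin d → ℝ => ‖x‖ ^ p * ρ₂ x)) :
    WpPow p (volume.withDensity (fun x => ENNReal.ofReal (ρ₁ x)))
        (volume.withDensity (fun x => ENNReal.ofReal (ρ₂ x)))
      ≤ ENNReal.ofReal (2 ^ (p - 1) * ∫ x, ‖x‖ ^ p * |ρ₁ x - ρ₂ x|) := by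
  have hmass₁ : ∫⁻ x, ENNReal.ofReal (ρ₁ x) = 1 := by
    rw [← ofReal_integral_eq_lintegral_ofReal (integrable_of_integral_eq_one h₁1)
      (ae_of_all _ h₁0), h₁1, ofReal_one]
  have hmass₂ : ∫⁻ x, ENNReal.ofReal (ρ₂ x) = 1 := by
    rw [← ofReal_integral_eq_lintegral_ofReal (integrable_of_integral_eq_one h₂1)
      (ae_of_all _ h₂0), h₂1, ofReal_one]
  have hmoment : Integrable fun x : Fin d → ℝ => ‖x‖ ^ p * |ρ₁ x - ρ₂ x| :=
    (h₁p.sub h₂p).abs.congr (ae_of_all _ fun x => by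
      simp only [Pi.sub_apply, ← mul_sub, abs_mul,
        abs_of_nonneg (Real.rpow_nonneg (norm_nonneg x) p)])
  calc _ ≤ ENNReal.ofReal (2 ^ (p - 1)) * ∫⁻ x, (ENNReal.ofReal (ρ₁ x) - ENNReal.ofReal (ρ₂ x) +
          (ENNReal.ofReal (ρ₂ x) - ENNReal.ofReal (ρ₁ x))) * ENNReal.ofReal (‖x‖ ^ p) :=
        WpPow_withDensity_le hp.le volume h₁meas.ennreal_ofReal h₂meas.ennreal_ofReal
          (hmass₁.trans hmass₂.symm) (hmass₁ ▸ one_ne_top)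
    _ = ENNReal.ofReal (2 ^ (p - 1)) * ∫⁻ x, ENNReal.ofReal (‖x‖ ^ p * |ρ₁ x - ρ₂ x|) := by
        congr 1
        refine lintegral_congr fun x => ?_
        rw [← ENNReal.ofReal_abs_sub (h₁0 x) (h₂0 x), mul_comm,
          ofReal_mul (Real.rpow_nonneg (norm_nonneg x) p)]
    _ = _ := by
        rw [← ofReal_integral_eq_lintegral_ofReal hmoment
          (ae_of_all _ fun x => by positivity), ← ofReal_mul (by positivity)]
end

section
/- Let (X, d) be a metric space, p, q ∈ (1,∞) conjugate exponents, and μ : [0,∞) → X a locally absolutely continuous curve with metric derivative |μ'|. Suppose g : [0,∞) → [0,∞] is Borel and E := φ∘μ ∈ W^{1,1}_loc((0,∞)) ∩ C([0,∞)) satisfies |E'(t)| ≤ g(μ(t))·|μ'|(t) a.e. (chain-rule upper bound). If additionally φ(μ(0)) − φ(μ(t)) ≥ (1/q)∫₀ᵗ g(μ(r))^q dr + (1/p)∫₀ᵗ |μ'|^p(r) dr for all t ≥ 0, then equality holds in this inequality for all 0 ≤ s ≤ t, and |E'(t)| = g(μ(t))^q = |μ'|^p(t) for a.e. t > 0. 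-/
open MeasureTheory Filter Set

/-! Chain rule and Young's inequality give `-E' ≤ |E'| ≤ g(μ)·|μ'| ≤ g(μ)^q/q + |μ'|^p/p =: D`
a.e., so `E s - E t ≤ ∫ₛᵗ D` for `0 < s ≤ t`, and by continuity of `E` also for `s = 0`. Against
the assumed reverse inequality on `[0, t]` this forces equality on every `[s, t]`. Then `D + E'`
is a.e. nonnegative with zero integral over every interval, hence `E' = -D` a.e., and the equality
case of Young's inequality gives `g(μ)^q = |μ'|^p`. -/

lemma young_inequality_one_div_mul {p q a b : ℝ} (hpq : q.HolderConjugate p) (ha : 0 ≤ a)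
    (hb : 0 ≤ b) : a * b ≤ 1 / q * a ^ q + 1 / p * b ^ p := by
  simpa only [one_div_mul_eq_div] using Real.young_inequality_of_nonneg ha hb hpq

lemma young_eq_of_abs_le_mul {p q a b c : ℝ} (hpq : q.HolderConjugate p) (ha : 0 ≤ a)
    (hb : 0 ≤ b) (hc : |c| ≤ a * b) (hyoung : 1 / q * a ^ q + 1 / p * b ^ p ≤ |c|) :
    |c| = a ^ q ∧ a ^ q = b ^ p := by
  have hle := young_inequality_one_div_mul hpq ha hb
  have heq : a ^ q = b ^ p := (Real.young_inequality_eq_iff_of_nonneg ha hb hpq).mp <| by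
    linarith [one_div_mul_eq_div q (a ^ q), one_div_mul_eq_div p (b ^ p)]
  have hsum : 1 / q * a ^ q + 1 / p * b ^ p = a ^ q := by
    rw [← heq, ← add_mul, hpq.one_div_add_one_div, div_one, one_mul]
  exact ⟨by linarith, heq⟩

lemma MeasureTheory.LocallyIntegrableOn.intervalIntegrable_of_lt {f : ℝ → ℝ} {a s t : ℝ}
    (hf : LocallyIntegrableOn f (Ioi a)) (hs : a < s) (ht : a < t) :
    IntervalIntegrable f volume s t :=
  (hf.integrableOn_compact_subset (fun _ hr => lt_of_lt_of_le (lt_min hs ht) hr.1)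
    isCompact_uIcc).intervalIntegrable

lemma ae_restrict_Ioi_eq_zero_of_intervalIntegral_eq_zero {f : ℝ → ℝ} {a : ℝ}
    (hf : ∀ s t, a < s → s < t → IntervalIntegrable f volume s t)
    (hf0 : ∀ᵐ r ∂volume.restrict (Ioi a), 0 ≤ f r)
    (hint : ∀ s t, a < s → s < t → ∫ r in s..t, f r = 0) :
    ∀ᵐ r ∂volume.restrict (Ioi a), f r = 0 := by
  refine ae_restrict_of_ae_restrict_inter_Ioo fun s t hs _ hst => ?_
  have hsub : Ioo s t ⊆ Ioi a := Ioo_subset_Ioi_self.trans (Ioi_subset_Ioi hs.le)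
  rw [inter_eq_right.mpr hsub]
  have hfint : IntegrableOn f (Ioo s t) :=
    ((hf s t hs hst).def'.mono_set (by rw [uIoc_of_le hst.le]; exact Ioo_subset_Ioc_self))
  have hzero : ∫ r in Ioo s t, f r = 0 := by
    rw [← integral_Ioc_eq_integral_Ioo, ← intervalIntegral.integral_of_le hst.le, hint s t hs hst]
  exact (setIntegral_eq_zero_iff_of_nonneg_ae (ae_restrict_of_ae_restrict_of_subset hsub hf0)
    hfint).mp hzero

section EnergyInequality

variable {E E' D : ℝ → ℝ}

lemma sub_le_intervalIntegral_of_pos (hE' : LocallyIntegrableOn E' (Ioi 0))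
    (hFTC : ∀ s t, 0 < s → s ≤ t → E t - E s = ∫ r in s..t, E' r)
    (hD : ∀ t, 0 ≤ t → IntervalIntegrable D volume 0 t)
    (hE'D : ∀ᵐ r ∂volume.restrict (Ioi 0), -E' r ≤ D r)
    {s t : ℝ} (hs : 0 < s) (hst : s ≤ t) :
    E s - E t ≤ ∫ r in s..t, D r := by
  have hmono := intervalIntegral.integral_mono_ae_restrict hst
    (hE'.intervalIntegrable_of_lt hs (hs.trans_le hst)).neg
    ((hD s hs.le).symm.trans (hD t (hs.le.trans hst)))
    (ae_restrict_of_ae_restrict_of_subset (fun _ hr => hs.trans_le hr.1) hE'D)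
  rw [Pi.neg_def, intervalIntegral.integral_neg, ← hFTC s t hs hst] at hmono
  linarith

lemma sub_le_intervalIntegral_of_continuousWithinAt (hE : ContinuousWithinAt E (Ioi 0) 0)
    (hE' : LocallyIntegrableOn E' (Ioi 0))
    (hFTC : ∀ s t, 0 < s → s ≤ t → E t - E s = ∫ r in s..t, E' r)
    (hD : ∀ t, 0 ≤ t → IntervalIntegrable D volume 0 t)
    (hE'D : ∀ᵐ r ∂volume.restrict (Ioi 0), -E' r ≤ D r)
    {t : ℝ} (ht : 0 ≤ t) :
    E 0 - E t ≤ ∫ r in (0 : ℝ)..t, D r := by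
  rcases ht.eq_or_lt with rfl | ht
  · simp
  have hlimE : Tendsto (fun ε => E ε - E t) (nhdsWithin 0 (Ioi 0)) (nhds (E 0 - E t)) :=
    hE.tendsto.sub tendsto_const_nhds
  have hlimD : Tendsto (fun ε => ∫ r in ε..t, D r) (nhdsWithin 0 (Ioi 0))
      (nhds (∫ r in (0 : ℝ)..t, D r)) := by
    have hcont := intervalIntegral.continuousOn_primitive_interval_left
      ((intervalIntegrable_iff' (f := D)).mp (hD t ht.le)) 0 left_mem_uIcc
    rw [← nhdsWithin_Ioo_eq_nhdsGT ht]
    exact (hcont.mono (Ioo_subset_Icc_self.trans_eq (uIcc_of_le ht.le).symm)).tendsto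
  refine le_of_tendsto_of_tendsto hlimE hlimD ?_
  filter_upwards [Ioo_mem_nhdsGT ht] with ε hε
  exact sub_le_intervalIntegral_of_pos hE' hFTC hD hE'D hε.1 hε.2.le

lemma sub_eq_intervalIntegral_of_energy_inequality (hE : ContinuousWithinAt E (Ioi 0) 0)
    (hE' : LocallyIntegrableOn E' (Ioi 0))
    (hFTC : ∀ s t, 0 < s → s ≤ t → E t - E s = ∫ r in s..t, E' r)
    (hD : ∀ t, 0 ≤ t → IntervalIntegrable D volume 0 t)
    (hE'D : ∀ᵐ r ∂volume.restrict (Ioi 0), -E' r ≤ D r)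
    (hedi : ∀ t, 0 ≤ t → ∫ r in (0 : ℝ)..t, D r ≤ E 0 - E t)
    {s t : ℝ} (hs : 0 ≤ s) (hst : s ≤ t) :
    E s - E t = ∫ r in s..t, D r := by
  have hzero : ∀ u, 0 ≤ u → E 0 - E u = ∫ r in (0 : ℝ)..u, D r := fun u hu =>
    le_antisymm (sub_le_intervalIntegral_of_continuousWithinAt hE hE' hFTC hD hE'D hu) (hedi u hu)
  rw [← intervalIntegral.integral_interval_sub_left (hD t (hs.trans hst)) (hD s hs),
    ← hzero t (hs.trans hst), ← hzero s hs]
  ring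

lemma ae_eq_neg_of_energy_inequality (hE : ContinuousWithinAt E (Ioi 0) 0)
    (hE' : LocallyIntegrableOn E' (Ioi 0))
    (hFTC : ∀ s t, 0 < s → s ≤ t → E t - E s = ∫ r in s..t, E' r)
    (hD : ∀ t, 0 ≤ t → IntervalIntegrable D volume 0 t)
    (hE'D : ∀ᵐ r ∂volume.restrict (Ioi 0), -E' r ≤ D r)
    (hedi : ∀ t, 0 ≤ t → ∫ r in (0 : ℝ)..t, D r ≤ E 0 - E t) :
    ∀ᵐ r ∂volume.restrict (Ioi 0), E' r = -D r := by
  have hDint : ∀ s t, 0 < s → s < t → IntervalIntegrable D volume s t :=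
    fun s t hs hst => (hD s hs.le).symm.trans (hD t (hs.trans hst).le)
  have hE'int : ∀ s t, 0 < s → s < t → IntervalIntegrable E' volume s t :=
    fun s t hs hst => hE'.intervalIntegrable_of_lt hs (hs.trans hst)
  have hsum := ae_restrict_Ioi_eq_zero_of_intervalIntegral_eq_zero
    (fun s t hs hst => (hDint s t hs hst).add (hE'int s t hs hst))
    (hE'D.mono fun r hr => by linarith) fun s t hs hst => by
      rw [intervalIntegral.integral_add (hDint s t hs hst) (hE'int s t hs hst),
        ← sub_eq_intervalIntegral_of_energy_inequality hE hE' hFTC hD hE'D hedi hs.le hst.le,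
        ← hFTC s t hs hst.le]
      ring
  filter_upwards [hsum] with r hr
  linarith

end EnergyInequality

theorem energy_dissipation_equality_general {X : Type*} [MetricSpace X]
    (p q : ℝ) (hp : 1 < p) (hpq : 1 / p + 1 / q = 1)
    (μ : ℝ → X) (md : ℝ → ℝ) (hmd0 : ∀ t, 0 ≤ md t)
    (φ : X → ℝ) (g : X → ℝ) (hg0 : ∀ x, 0 ≤ g x)
    (E E' : ℝ → ℝ) (hE : ∀ t, E t = φ (μ t)) (hEc : Continuous E)
    (hE'loc : LocallyIntegrableOn E' (Set.Ioi 0))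
    (hW11 : ∀ s t : ℝ, 0 < s → s ≤ t → E t - E s = ∫ r in s..t, E' r)
    (hchain : ∀ᵐ t ∂(volume.restrict (Set.Ioi (0 : ℝ))),
      |E' t| ≤ g (μ t) * md t)
    (hgint : ∀ t ≥ (0 : ℝ),
      IntervalIntegrable (fun r => g (μ r) ^ q) volume 0 t)
    (hmint : ∀ t ≥ (0 : ℝ),
      IntervalIntegrable (fun r => md r ^ p) volume 0 t)
    (hedi : ∀ t ≥ (0 : ℝ),
      (1 / q) * (∫ r in (0 : ℝ)..t, g (μ r) ^ q)
          + (1 / p) * (∫ r in (0 : ℝ)..t, md r ^ p)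
        ≤ φ (μ 0) - φ (μ t)) :
    (∀ s t : ℝ, 0 ≤ s → s ≤ t →
      φ (μ s) - φ (μ t)
        = (1 / q) * (∫ r in s..t, g (μ r) ^ q)
            + (1 / p) * (∫ r in s..t, md r ^ p)) ∧
    (∀ᵐ t ∂(volume.restrict (Set.Ioi (0 : ℝ))),
      |E' t| = g (μ t) ^ q ∧ g (μ t) ^ q = md t ^ p) := by
  have hqp : q.HolderConjugate p :=
    (Real.holderConjugate_iff.mpr ⟨hp, by simpa only [one_div] using hpq⟩).symm
  set D : ℝ → ℝ := fun r => 1 / q * g (μ r) ^ q + 1 / p * md r ^ p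
  have hD : ∀ t, 0 ≤ t → IntervalIntegrable D volume 0 t := fun t ht =>
    ((hgint t ht).const_mul _).add ((hmint t ht).const_mul _)
  have hD_integral : ∀ s t, 0 ≤ s → 0 ≤ t → ∫ r in s..t, D r =
      1 / q * (∫ r in s..t, g (μ r) ^ q) + 1 / p * (∫ r in s..t, md r ^ p) := fun s t hs ht => by
    rw [intervalIntegral.integral_add (((hgint s hs).symm.trans (hgint t ht)).const_mul _)
      (((hmint s hs).symm.trans (hmint t ht)).const_mul _),
      intervalIntegral.integral_const_mul, intervalIntegral.integral_const_mul]
  have hE'D : ∀ᵐ r ∂volume.restrict (Set.Ioi 0), -E' r ≤ D r :=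
    hchain.mono fun r hr => (neg_le_abs _).trans <| hr.trans <|
      young_inequality_one_div_mul hqp (hg0 (μ r)) (hmd0 r)
  have hedi' : ∀ t, 0 ≤ t → ∫ r in (0 : ℝ)..t, D r ≤ E 0 - E t := fun t ht => by
    rw [hD_integral 0 t le_rfl ht, hE, hE]
    exact hedi t ht
  refine ⟨fun s t hs hst => ?_, ?_⟩
  · rw [← hE, ← hE, ← hD_integral s t hs (hs.trans hst)]
    exact sub_eq_intervalIntegral_of_energy_inequality hEc.continuousWithinAt hE'loc hW11 hD hE'D
      hedi' hs hst
  · filter_upwards [ae_eq_neg_of_energy_inequality hEc.continuousWithinAt hE'loc hW11 hD hE'D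
      hedi', hchain] with r hr hchain_r
    exact young_eq_of_abs_le_mul hqp (hg0 (μ r)) (hmd0 r) hchain_r
      (by rw [hr, abs_neg]; exact le_abs_self _)

/-- If `μ` is a locally absolutely continuous curve with metric
derivative `md`, `E = φ ∘ μ ∈ W^{1,1}_loc ∩ C` with chain-rule upper bound
`|E'| ≤ g(μ(·))·md`, and the energy dissipation inequality
`φ(μ(0)) − φ(μ(t)) ≥ (1/q)∫₀ᵗ g(μ)^q + (1/p)∫₀ᵗ md^p` holds for all `t ≥ 0`,
then equality holds on every interval `[s,t]` and
`|E'(t)| = g(μ(t))^q = md(t)^p` a.e. -/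
theorem energy_dissipation_equality {X : Type*} [MetricSpace X]
    (p q : ℝ) (hp : 1 < p) (hq : 1 < q) (hpq : 1 / p + 1 / q = 1)
    (μ : ℝ → X) (md : ℝ → ℝ) (hmd0 : ∀ t, 0 ≤ md t)
    (hmdloc : LocallyIntegrableOn md (Set.Ioi 0))
    (hac : ∀ s t : ℝ, 0 ≤ s → s ≤ t → dist (μ s) (μ t) ≤ ∫ r in s..t, md r)
    (hmdderiv : ∀ᵐ t ∂(volume.restrict (Set.Ioi (0 : ℝ))),
      Tendsto (fun s => dist (μ s) (μ t) / |s - t|)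
        (nhdsWithin t {t}ᶜ) (nhds (md t)))
    (φ : X → ℝ) (g : X → ℝ) (hg0 : ∀ x, 0 ≤ g x)
    (E E' : ℝ → ℝ) (hE : ∀ t, E t = φ (μ t)) (hEc : Continuous E)
    (hE'loc : LocallyIntegrableOn E' (Set.Ioi 0))
    (hW11 : ∀ s t : ℝ, 0 < s → s ≤ t → E t - E s = ∫ r in s..t, E' r)
    (hchain : ∀ᵐ t ∂(volume.restrict (Set.Ioi (0 : ℝ))),
      |E' t| ≤ g (μ t) * md t)
    (hgint : ∀ t ≥ (0 : ℝ),
      IntervalIntegrable (fun r => g (μ r) ^ q) volume 0 t)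
    (hmint : ∀ t ≥ (0 : ℝ),
      IntervalIntegrable (fun r => md r ^ p) volume 0 t)
    (hedi : ∀ t ≥ (0 : ℝ),
      (1 / q) * (∫ r in (0 : ℝ)..t, g (μ r) ^ q)
          + (1 / p) * (∫ r in (0 : ℝ)..t, md r ^ p)
        ≤ φ (μ 0) - φ (μ t)) :
    (∀ s t : ℝ, 0 ≤ s → s ≤ t →
      φ (μ s) - φ (μ t)
        = (1 / q) * (∫ r in s..t, g (μ r) ^ q)
            + (1 / p) * (∫ r in s..t, md r ^ p)) ∧
    (∀ᵐ t ∂(volume.restrict (Set.Ioi (0 : ℝ))),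
      |E' t| = g (μ t) ^ q ∧ g (μ t) ^ q = md t ^ p) :=
  energy_dissipation_equality_general p q hp hpq μ md hmd0 φ g hg0 E E' hE hEc hE'loc hW11 hchain
    hgint hmint hedi
end
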